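/- Let d = 3 and consider the 3-player linear game with inputs x, y, z ∈ ℤ₃ satisfying the promise x + y + z ≡ 0 (mod 3), uniformly distributed over the 9 valid triples, and winning condition a + b + c ≡ x·y·z (mod 3). Then the GHZ₃ quantum strategy wins with probability 1: explicitly, with the state |GHZ₃⟩ = (|000⟩+|111⟩+|222⟩)/√3 and the projective measurements onto the vectors given by |A_x^a⟩, |B_y^b⟩, |C_z^c⟩ (each a Fourier-type basis of ℂ³ with phases specified by powers of ζ = e^{2πi/3}), the probability that the outcomes satisfy a + b + c ≡ x·y·z mod 3 equals 1 for every valid input triple. -/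

import Mathlib

open Finset

/-- `ζ^r = e^{2πir/3}` (with `r` possibly fractional). -/
noncomputable def zp (r : ℝ) : ℂ := Complex.exp (2 * Real.pi * Complex.I * (r : ℂ) / 3)

/-- Alice's (and Bob's) measurement basis vectors `|A_x^a⟩` (unnormalized table). -/
noncomputable def tA : Fin 3 → Fin 3 → Fin 3 → ℂ :=
  ![![![zp 0, zp (4/3), zp 0], ![zp 2, zp (7/3), zp 0], ![zp 1, zp (1/3), zp 0]],
    ![![zp (1/3), zp 0, zp 0], ![zp (7/3), zp 1, zp 0], ![zp (4/3), zp 2, zp 0]],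
    ![![zp (8/3), zp (8/3), zp 0], ![zp (5/3), zp (2/3), zp 0], ![zp (2/3), zp (5/3), zp 0]]]

/-- Charlie's measurement basis vectors `|C_z^c⟩` (unnormalized table). -/
noncomputable def tC : Fin 3 → Fin 3 → Fin 3 → ℂ :=
  ![![![zp 0, zp (1/3), zp 0], ![zp 2, zp (4/3), zp 0], ![zp 1, zp (7/3), zp 0]],
    ![![zp (1/3), zp 2, zp 0], ![zp (7/3), zp 0, zp 0], ![zp (4/3), zp 1, zp 0]],
    ![![zp (8/3), zp (5/3), zp 0], ![zp (5/3), zp (8/3), zp 0], ![zp (2/3), zp (2/3), zp 0]]]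

/-- Normalized vector `|A_x^a⟩` (also used for Bob). -/
noncomputable def Avec (x a : Fin 3) : Fin 3 → ℂ := fun i => tA x a i / (Real.sqrt 3 : ℂ)

/-- Normalized vector `|C_z^c⟩`. -/
noncomputable def Cvec (z c : Fin 3) : Fin 3 → ℂ := fun i => tC z c i / (Real.sqrt 3 : ℂ)

/-- The state `|GHZ₃⟩ = (|000⟩+|111⟩+|222⟩)/√3`. -/
noncomputable def ghz3 : Fin 3 × Fin 3 × Fin 3 → ℂ := fun w =>
  if w.1 = w.2.1 ∧ w.2.1 = w.2.2 then (1 : ℂ) / (Real.sqrt 3 : ℂ) else 0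

/-- The outcome probability `P(a,b,c|x,y,z) = |⟨GHZ₃| (|A_x^a⟩⊗|B_y^b⟩⊗|C_z^c⟩)|²`. -/
noncomputable def Pout (x y z a b c : Fin 3) : ℝ :=
  ‖∑ w : Fin 3 × Fin 3 × Fin 3,
    (starRingEnd ℂ) (ghz3 w) * (Avec x a w.1 * Avec y b w.2.1 * Cvec z c w.2.2)‖ ^ 2

/-!
Only the diagonal of `|GHZ₃⟩` contributes, so `⟨GHZ₃|A ⊗ B ⊗ C⟩ = 3⁻² ∑ᵢ A(i) B(i) C(i)` for the
unnormalized vectors. All their entries are powers of the ninth root of unity `ν = ζ^{1/3}`, and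
whenever `x + y + z ≡ 0` and `a + b + c ≡ xyz` the three exponents add up to a multiple of `9` in
every coordinate: the phases align, the amplitude is `1/3`, and each of the nine winning triples
`(a, b, c)` (one `c` for every `a, b`) has probability `1/9`.
-/

lemma zp_add (r s : ℝ) : zp (r + s) = zp r * zp s := by
  rw [zp, zp, zp, ← Complex.exp_add]
  push_cast
  ring_nf

lemma zp_pow (r : ℝ) (n : ℕ) : zp r ^ n = zp (n * r) := by
  induction n with
  | zero => simp [zp]
  | succ k ih => rw [pow_succ, ih, ← zp_add]; push_cast; ring_nf

lemma zp_three : zp 3 = 1 := by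
  rw [zp, show 2 * Real.pi * Complex.I * ((3 : ℝ) : ℂ) / 3 = 2 * Real.pi * Complex.I by push_cast; ring,
    Complex.exp_two_pi_mul_I]

noncomputable def nu : ℂ := zp (1 / 3)

lemma nu_pow_nine : nu ^ 9 = 1 := by
  rw [nu, zp_pow]
  norm_num [zp_three]

lemma nu_pow_of_dvd {n : ℕ} (h : 9 ∣ n) : nu ^ n = 1 := by
  obtain ⟨k, rfl⟩ := h
  rw [pow_mul, nu_pow_nine, one_pow]

/-- `tA x a i = ν ^ eA x a i` and `tC z c i = ν ^ eC z c i`. -/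
def eA : Fin 3 → Fin 3 → Fin 3 → ℕ :=
  ![![![0, 4, 0], ![6, 7, 0], ![3, 1, 0]],
    ![![1, 0, 0], ![7, 3, 0], ![4, 6, 0]],
    ![![8, 8, 0], ![5, 2, 0], ![2, 5, 0]]]

def eC : Fin 3 → Fin 3 → Fin 3 → ℕ :=
  ![![![0, 1, 0], ![6, 4, 0], ![3, 7, 0]],
    ![![1, 6, 0], ![7, 0, 0], ![4, 3, 0]],
    ![![8, 5, 0], ![5, 8, 0], ![2, 2, 0]]]

lemma tA_eq_nu_pow (x a i : Fin 3) : tA x a i = nu ^ eA x a i := by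
  fin_cases x <;> fin_cases a <;> fin_cases i <;>
    simp only [tA, eA, nu, zp_pow] <;> norm_num

lemma tC_eq_nu_pow (z c i : Fin 3) : tC z c i = nu ^ eC z c i := by
  fin_cases z <;> fin_cases c <;> fin_cases i <;>
    simp only [tC, eC, nu, zp_pow] <;> norm_num

lemma nine_dvd_phase_of_win (x y z a b c i : Fin 3) (hxyz : x + y + z = 0)
    (hwin : a + b + c = x * y * z) : 9 ∣ eA x a i + eA y b i + eC z c i := by
  revert x y z a b c i
  decide

lemma ghz3_amplitude (u v w : Fin 3 → ℂ) :
    ∑ t : Fin 3 × Fin 3 × Fin 3, (starRingEnd ℂ) (ghz3 t) * (u t.1 * v t.2.1 * w t.2.2)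
      = (Real.sqrt 3 : ℂ)⁻¹ * ∑ i, u i * v i * w i := by
  simp only [ghz3, Fintype.sum_prod_type, Fin.sum_univ_three, Fin.isValue, Fin.reduceEq,
    and_true, and_false, ↓reduceIte, one_div, map_inv₀, Complex.conj_ofReal, map_zero,
    zero_mul, add_zero, zero_add]
  ring

lemma Pout_eq (x y z a b c : Fin 3) :
    Pout x y z a b c = ‖∑ i, tA x a i * tA y b i * tC z c i‖ ^ 2 / 81 := by
  have h3 : ‖(Real.sqrt 3 : ℂ)‖ ^ 2 = 3 := by
    rw [Complex.norm_real, Real.norm_eq_abs, sq_abs, Real.sq_sqrt (by norm_num)]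
  rw [Pout, ghz3_amplitude]
  simp only [Avec, Cvec, div_mul_div_comm, ← Finset.sum_div]
  rw [norm_mul, norm_div, norm_inv, mul_pow, div_pow, inv_pow, norm_mul, norm_mul, mul_pow,
    mul_pow, h3]
  ring

lemma Pout_of_win (x y z a b c : Fin 3) (hxyz : x + y + z = 0) (hwin : a + b + c = x * y * z) :
    Pout x y z a b c = 1 / 9 := by
  have hphase : ∀ i, tA x a i * tA y b i * tC z c i = 1 := fun i => by
    rw [tA_eq_nu_pow, tA_eq_nu_pow, tC_eq_nu_pow, ← pow_add, ← pow_add,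
      nu_pow_of_dvd (nine_dvd_phase_of_win x y z a b c i hxyz hwin)]
  rw [Pout_eq, Finset.sum_congr rfl fun i _ => hphase i]
  norm_num

/-- For the 3-player game with inputs `x + y + z ≡ 0 (mod 3)` and winning
condition `a + b + c ≡ x·y·z (mod 3)`, the GHZ₃ strategy wins with probability 1 on every
valid input triple. -/
theorem ghz3_strategy_wins (x y z : Fin 3) (hxyz : x + y + z = 0) :
    ∑ a : Fin 3, ∑ b : Fin 3, ∑ c : Fin 3,
      (if a + b + c = x * y * z then Pout x y z a b c else 0) = 1 := by
  have hwin (a b : Fin 3) : a + b + (x * y * z - (a + b)) = x * y * z := add_sub_cancel _ _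
  simp_rw [← eq_sub_iff_add_eq', Finset.sum_ite_eq', Finset.mem_univ, if_true,
    Pout_of_win x y z _ _ _ hxyz (hwin _ _)]
  norm_num
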